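/- If i is a sink of a quiver Q and V ∈ Rep(Q) is such that x_i⁺ : ⊕_{h: t(h)=i} V_{s(h)} → V_i is surjective, then the dimension vector of Φ_i⁺(V) equals s_i(|V|), where s_i is the simple reflection at i. -/
import Mathlib


open Finset

/-- A representation of the quiver `Q = (I, H, s, t)` over `k`. -/
structure QRep (k : Type) [Field k] {I H : Type} (s t : H → I) where
  V : I → Type
  [acg : ∀ i, AddCommGroup (V i)]
  [mod : ∀ i, Module k (V i)]
  x : ∀ h, V (s h) →ₗ[k] V (t h)

attribute [instance] QRep.acg QRep.mod

variable {k I H : Type} [Field k] [Fintype I] [Fintype H] [DecidableEq I] {s t : H → I}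

/-- Transport along an equality of vertices. -/
def vcast (A : QRep k s t) {a b : I} (e : a = b) : A.V a →ₗ[k] A.V b := by
  subst e; exact LinearMap.id

/-- For a vertex `i`, the map `x_i⁺ = ⊕_{h : t(h) = i} x_h : ⊕_{h} V_{s(h)} → V_i`. -/
noncomputable def plusMap (A : QRep k s t) (i : I) :
    (∀ h : {h : H // t h = i}, A.V (s h.1)) →ₗ[k] A.V i :=
  ∑ h : {h : H // t h = i}, (vcast A h.2 ∘ₗ A.x h.1) ∘ₗ LinearMap.proj h

/-- Let `i` be a sink of `Q` and `V` a representation such that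
`x_i⁺ : ⊕_{h : t(h)=i} V_{s(h)} → V_i` is surjective.  Then the dimension vector of
`Φ_i⁺(V)` (which has `Ker x_i⁺` at `i` and `V_j` at `j ≠ i`) equals `s_i(|V|)`, where
`s_i(α) = α − (α, i)·i` is the simple reflection for the symmetric form given by
`(i,i) = 2` and `(i,j) = −#(edges between i and j)` for `i ≠ j`. -/
theorem reflection_functor_dimension_vector
    (A : QRep k s t) [∀ j, FiniteDimensional k (A.V j)]
    (i : I) (hsink : ∀ h : H, s h ≠ i)
    (hsurj : Function.Surjective (plusMap A i))
    -- the Cartan-type coefficients of the symmetric form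
    (c : I → I → ℤ)
    (hdiag : ∀ j, c j j = 2)
    (hoff : ∀ j j', j ≠ j' →
      c j j' = -((univ.filter (fun h => (s h = j ∧ t h = j') ∨ (s h = j' ∧ t h = j))).card : ℤ))
    -- the symmetric bilinear form and the dimension vector of `V`
    (B : (I → ℤ) → (I → ℤ) → ℤ)
    (hB : ∀ α β, B α β = ∑ j, ∑ j', c j j' * α j * β j')
    (ν : I → ℤ) (hν : ∀ j, ν j = (Module.finrank k (A.V j) : ℤ)) :
    ∀ j : I,
      (if j = i then (Module.finrank k (LinearMap.ker (plusMap A i)) : ℤ)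
        else (Module.finrank k (A.V j) : ℤ))
        = ν j - B ν (fun j' => if j' = i then 1 else 0) * (if j = i then 1 else 0) := by
  intro j
  by_cases hj : j = i
  · subst hj
    simp only [if_pos rfl, mul_one]
    -- the dimension of the domain of plusMap
    have hD : (Module.finrank k (∀ h : {h : H // t h = j}, A.V (s h.1)) : ℤ)
        = ∑ h : {h : H // t h = j}, ν (s h.1) := by
      rw [Module.finrank_pi_fintype k]
      push_cast
      exact Finset.sum_congr rfl fun h _ => (hν (s h.1)).symm
    -- rank-nullity
    have hrn := LinearMap.finrank_range_add_finrank_ker (plusMap A j)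
    rw [LinearMap.range_eq_top.mpr hsurj, finrank_top] at hrn
    have hker : (Module.finrank k (LinearMap.ker (plusMap A j)) : ℤ)
        = (∑ h : {h : H // t h = j}, ν (s h.1)) - ν j := by
      rw [← hD, hν]
      omega
    -- compute B ν e_j
    have hBval : B ν (fun j' => if j' = j then 1 else 0)
        = 2 * ν j - ∑ h : {h : H // t h = j}, ν (s h.1) := by
      rw [hB]
      have hinner : ∀ l : I,
          (∑ j' : I, c l j' * ν l * (if j' = j then (1:ℤ) else 0)) = c l j * ν l := by
        intro l
        simp [mul_ite]
      simp only [hinner]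
      -- split off l = j
      rw [← Finset.add_sum_erase _ _ (Finset.mem_univ j), hdiag]
      have hS : (∑ l ∈ Finset.univ.erase j, c l j * ν l)
          = - ∑ h : {h : H // t h = j}, ν (s h.1) := by
        have hcard : ∀ l ∈ Finset.univ.erase j, c l j * ν l
            = -(((Finset.univ.filter (fun h => s h = l ∧ t h = j)).card : ℤ) * ν l) := by
          intro l hl
          have hlj : l ≠ j := Finset.ne_of_mem_erase hl
          rw [hoff l j hlj]
          have hset : (Finset.univ.filter (fun h => (s h = l ∧ t h = j) ∨ (s h = j ∧ t h = l)))
              = Finset.univ.filter (fun h => s h = l ∧ t h = j) := by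
            apply Finset.filter_congr
            intro h _
            constructor
            · rintro (⟨h1, h2⟩ | ⟨h1, h2⟩)
              · exact ⟨h1, h2⟩
              · exact absurd h1 (hsink h)
            · exact Or.inl
          rw [hset]; ring
        rw [Finset.sum_congr rfl hcard, Finset.sum_neg_distrib, neg_inj]
        -- relate the sum over subtype to sums over filters
        have hsub : (∑ h : {h : H // t h = j}, ν (s h.1))
            = ∑ h ∈ Finset.univ.filter (fun h => t h = j), ν (s h) :=
          (Finset.sum_subtype (Finset.univ.filter (fun h => t h = j))
            (fun h => by simp) (fun h => ν (s h))).symm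
        rw [hsub, ← Finset.sum_fiberwise_of_maps_to
          (g := s) (t := Finset.univ.erase j) (f := fun h => ν (s h))
          (fun h _ => Finset.mem_erase.mpr ⟨hsink h, Finset.mem_univ _⟩)]
        apply Finset.sum_congr rfl
        intro l hl
        have : ((Finset.univ.filter (fun h => t h = j)).filter (fun h => s h = l))
            = Finset.univ.filter (fun h => s h = l ∧ t h = j) := by
          ext h
          simp [and_comm]
        rw [this, Finset.sum_congr rfl (fun h hh => by
          rw [(Finset.mem_filter.mp hh).2.1]), Finset.sum_const, nsmul_eq_mul]
      rw [hS]
      ring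
    rw [hker, hBval]
    simp only [if_true]
    ring
  · simp [hj, hν j]
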